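/- (Quantum A-polynomial equation for the (−m)-loop quiver.) Fix m ∈ ℕ. In K[[x]] with K = ℚ(q), let A = Σ_{d≥0} (−q)^{−m d²} q^{(m+1)d} x^d/(q²;q²)_d and B = Σ_{d≥0} (−q)^{−m d²} q^{(m+3)d} x^d/(q²;q²)_d (so A = P_{−m}(q^{m+1}x) and B = P_{−m}(q^{m+3}x)). A has constant term 1, hence is a unit; set Y = B·A^{−1}. For c ∈ K let Y(cx) denote the rescaled series whose coefficient of x^n is c^n times that of Y. Then ∏_{i=1}^{m} Y(q^{−2i}x) · (1 − Y) + (−1)^{m+1} q x = 0; equivalently Y satisfies the extremal quantum A-polynomial equation 1 − Y(x) + (−1)^{m+1} q x ∏_{i=1}^{m} Y(q^{−2i}x)^{−1} = 0. -/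

import Mathlib

noncomputable section

/-- The base field `K = ℚ(q)`. -/
abbrev K : Type := RatFunc ℚ

/-- The variable `q` of `K = ℚ(q)`. -/
def qq : K := RatFunc.X

/-- The finite q-Pochhammer symbol `(α; q²)_n = ∏_{k=0}^{n-1} (1 - α q^{2k})`. -/
def qPoch (α : K) (n : ℕ) : K := ∏ k ∈ Finset.range n, (1 - α * qq ^ (2 * k))

/-- The quadratic form `dᵀ C d` of an integer matrix on a dimension vector. -/
def quadForm {N : ℕ} (C : Matrix (Fin N) (Fin N) ℤ) (d : Fin N → ℕ) : ℤ :=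
  ∑ i, ∑ j, C i j * (d i : ℤ) * (d j : ℤ)

/-- The coefficient of `x^d` in the motivic generating series of the extended
symmetric quiver with adjacency matrix `C`: `(-q)^{dᵀCd} / ∏ᵢ (q²;q²)_{dᵢ}`. -/
def Pcoeff {N : ℕ} (C : Matrix (Fin N) (Fin N) ℤ) (d : Fin N → ℕ) : K :=
  (-qq) ^ quadForm C d / ∏ i, qPoch (qq ^ 2) (d i)

/-! Write `R_k = P_{-m}(q^k x)`. The `n`-loop series satisfies the q-difference equation
`P_n(x) - P_n(q²x) = (-q)^n x P_n(q^{2n} x)`, because `(q²;q²)_d = (q²;q²)_{d-1} (1 - q^{2d})`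
and `n d² = n (d-1)² + n (2d - 1)`. At `n = -m`, rescaled by `q^{m+1}`, it reads
`R_{m+1} - R_{m+3} = (-1)^m q x R_{1-m}`. As `Y = R_{m+3} / R_{m+1}`, the factor
`Y(q^{-2i}x) = R_{m+3-2i} / R_{m+1-2i}`, so the product over `i` telescopes to `R_{m+1} / R_{1-m}`,
and multiplying it by `1 - Y = (R_{m+1} - R_{m+3}) / R_{m+1}` leaves `(-1)^m q x`. -/

namespace PowerSeries

variable {k : Type*} [Field k]

lemma constantCoeff_rescale {R : Type*} [CommSemiring R] (c : R) (φ : R⟦X⟧) :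
    constantCoeff (rescale c φ) = constantCoeff φ := by
  rw [← coeff_zero_eq_constantCoeff_apply, coeff_rescale, pow_zero, one_mul,
    coeff_zero_eq_constantCoeff_apply]

lemma rescale_C {R : Type*} [CommSemiring R] (c a : R) : rescale c (C a) = C a := by
  ext (_ | n) <;> simp [coeff_rescale, coeff_C]

lemma rescale_zpow_rescale_zpow {a : k} (ha : a ≠ 0) (i j : ℤ) (φ : k⟦X⟧) :
    rescale (a ^ i) (rescale (a ^ j) φ) = rescale (a ^ (j + i)) φ := by
  rw [rescale_rescale, zpow_add₀ ha]

lemma rescale_inv (c : k) {φ : k⟦X⟧} (hφ : constantCoeff φ ≠ 0) :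
    rescale c φ⁻¹ = (rescale c φ)⁻¹ := by
  rw [eq_comm, inv_eq_iff_mul_eq_one (by rwa [constantCoeff_rescale]), ← map_mul,
    PowerSeries.inv_mul_cancel _ hφ, map_one]

lemma prod_Icc_mul_inv_telescope (f : ℕ → k⟦X⟧) (hf : ∀ n, constantCoeff (f n) ≠ 0)
    (n : ℕ) :
    ∏ i ∈ Finset.Icc 1 n, f (i - 1) * (f i)⁻¹ = f 0 * (f n)⁻¹ := by
  induction n with
  | zero => simp [PowerSeries.mul_inv_cancel _ (hf 0)]
  | succ n ih =>
    rw [Finset.prod_Icc_succ_top (by omega), ih, Nat.add_sub_cancel]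
    linear_combination f 0 * (f (n + 1))⁻¹ * PowerSeries.inv_mul_cancel _ (hf n)

end PowerSeries

open PowerSeries

lemma qq_ne_zero : qq ≠ 0 := RatFunc.X_ne_zero

lemma qq_pow_ne_one {n : ℕ} (hn : n ≠ 0) : qq ^ n ≠ 1 := by
  intro h
  have hX : algebraMap (Polynomial ℚ) K (Polynomial.X ^ n) = algebraMap (Polynomial ℚ) K 1 := by
    simpa [qq, RatFunc.algebraMap_X] using h
  have := congrArg Polynomial.natDegree (RatFunc.algebraMap_injective ℚ hX)
  simp [hn] at this

lemma qPoch_succ (d : ℕ) :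
    qPoch (qq ^ 2) (d + 1) = qPoch (qq ^ 2) d * (1 - (qq ^ 2) ^ (d + 1)) := by
  rw [qPoch, qPoch, Finset.prod_range_succ]
  ring

lemma one_sub_qq_sq_pow_ne_zero (d : ℕ) : (1 : K) - (qq ^ 2) ^ (d + 1) ≠ 0 := by
  rw [sub_ne_zero, ← pow_mul]
  exact (qq_pow_ne_one (by omega)).symm

lemma qPoch_ne_zero (d : ℕ) : qPoch (qq ^ 2) d ≠ 0 := by
  induction d with
  | zero => simp [qPoch]
  | succ d ih => rw [qPoch_succ]; exact mul_ne_zero ih (one_sub_qq_sq_pow_ne_zero d)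

def loopQuiverSeries (m : ℤ) : K⟦X⟧ :=
  mk fun d => Pcoeff !![m] ![d]

lemma coeff_loopQuiverSeries (m : ℤ) (d : ℕ) :
    coeff d (loopQuiverSeries m) = (-qq) ^ (m * (d : ℤ) ^ 2) / qPoch (qq ^ 2) d := by
  rw [loopQuiverSeries, coeff_mk, Pcoeff, quadForm, Fin.sum_univ_one, Fin.sum_univ_one,
    Fin.prod_univ_one]
  congr 2
  show m * d * d = m * d ^ 2
  ring

lemma constantCoeff_loopQuiverSeries (m : ℤ) : constantCoeff (loopQuiverSeries m) = 1 := by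
  simpa [qPoch] using coeff_loopQuiverSeries m 0

lemma loopQuiverSeries_sub_rescale (m : ℤ) :
    loopQuiverSeries m - rescale (qq ^ 2) (loopQuiverSeries m) =
      C ((-qq) ^ m) * X * rescale (qq ^ (2 * m)) (loopQuiverSeries m) := by
  ext (_ | d)
  · simp [constantCoeff_rescale]
  · have hexp : (-qq) ^ (m * ((d + 1 : ℕ) : ℤ) ^ 2) =
        (-qq) ^ m * (qq ^ (2 * m)) ^ d * (-qq) ^ (m * (d : ℤ) ^ 2) := by
      have hq : -qq ≠ 0 := neg_ne_zero.mpr qq_ne_zero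
      rw [← (even_two_mul m).neg_zpow, ← zpow_natCast, ← zpow_mul, ← zpow_add₀ hq,
        ← zpow_add₀ hq]
      congr 1
      push_cast
      ring
    have := one_sub_qq_sq_pow_ne_zero d
    rw [map_sub, mul_assoc, coeff_C_mul, coeff_succ_X_mul, coeff_rescale, coeff_rescale,
      coeff_loopQuiverSeries, coeff_loopQuiverSeries, qPoch_succ, hexp]
    field_simp [qPoch_ne_zero d]

lemma mk_eq_rescale_loopQuiverSeries (m : ℤ) (k : ℕ) :
    (mk fun d : ℕ => (-qq) ^ (m * (d : ℤ) ^ 2) * qq ^ (k * d) / qPoch (qq ^ 2) d) =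
      rescale (qq ^ (k : ℤ)) (loopQuiverSeries m) := by
  ext d
  rw [coeff_mk, coeff_rescale, coeff_loopQuiverSeries, zpow_natCast, pow_mul]
  ring

lemma rescale_loopQuiverSeries_neg_sub (m : ℕ) :
    rescale (qq ^ ((m : ℤ) + 1)) (loopQuiverSeries (-m)) -
        rescale (qq ^ ((m : ℤ) + 3)) (loopQuiverSeries (-m)) =
      C ((-1) ^ m * qq) * X * rescale (qq ^ (1 - (m : ℤ))) (loopQuiverSeries (-m)) := by
  have hscale : qq ^ 2 * qq ^ ((m : ℤ) + 1) = qq ^ ((m : ℤ) + 3) := by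
    rw [← zpow_natCast, ← zpow_add₀ qq_ne_zero]
    congr 1
    push_cast
    ring
  have hcoeff : (-qq) ^ (-(m : ℤ)) * qq ^ ((m : ℤ) + 1) = (-1) ^ m * qq := by
    have hsq : ((-1 : K) ^ m) ^ 2 = 1 := by rw [← pow_mul, mul_comm, pow_mul]; norm_num
    rw [zpow_neg, zpow_natCast, zpow_add_one₀ qq_ne_zero, zpow_natCast, neg_pow, mul_inv]
    field_simp [qq_ne_zero]
    exact hsq.symm
  have h := congrArg (rescale (qq ^ ((m : ℤ) + 1))) (loopQuiverSeries_sub_rescale (-m))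
  rwa [map_sub, map_mul, map_mul, rescale_C, rescale_X, rescale_rescale, hscale,
    rescale_zpow_rescale_zpow qq_ne_zero, show 2 * -(m : ℤ) + (m + 1) = 1 - m by ring,
    ← mul_assoc, ← map_mul, hcoeff] at h

/-- **The extremal quantum A-polynomial equation for the `(−m)`-loop quiver
(Eq. (A.3)):** with `A = P_{−m}(q^{m+1}x)`, `B = P_{−m}(q^{m+3}x)` (both in `K[[x]]`,
`A` with constant term `1`, hence a unit) and `Y = B·A⁻¹`, one has
`∏_{i=1}^{m} Y(q^{−2i}x) · (1 − Y) + (−1)^{m+1} q x = 0`. -/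
theorem statement16 (m : ℕ) :
    letI A : PowerSeries K := PowerSeries.mk fun d : ℕ =>
      (-qq) ^ (-(m : ℤ) * (d : ℤ) ^ 2) * qq ^ ((m + 1) * d) / qPoch (qq ^ 2) d
    letI B : PowerSeries K := PowerSeries.mk fun d : ℕ =>
      (-qq) ^ (-(m : ℤ) * (d : ℤ) ^ 2) * qq ^ ((m + 3) * d) / qPoch (qq ^ 2) d
    letI Y : PowerSeries K := B * A⁻¹
    PowerSeries.constantCoeff A = 1 ∧
    (∏ i ∈ Finset.Icc 1 m, PowerSeries.rescale (qq ^ (-2 * (i : ℤ))) Y) * (1 - Y) +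
        PowerSeries.C ((-1) ^ (m + 1) * qq) * PowerSeries.X = 0 := by
  set R : ℤ → K⟦X⟧ := fun k => rescale (qq ^ k) (loopQuiverSeries (-m))
  have hR1 (k : ℤ) : constantCoeff (R k) = 1 := by
    rw [constantCoeff_rescale, constantCoeff_loopQuiverSeries]
  have hR (k : ℤ) : constantCoeff (R k) ≠ 0 := by rw [hR1]; exact one_ne_zero
  have hA := mk_eq_rescale_loopQuiverSeries (-m) (m + 1)
  have hB := mk_eq_rescale_loopQuiverSeries (-m) (m + 3)
  push_cast at hA hB
  rw [hA, hB]
  refine ⟨hR1 _, ?_⟩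
  have hY : ∀ i ∈ Finset.Icc 1 m,
      rescale (qq ^ (-2 * (i : ℤ))) (R (m + 3) * (R (m + 1))⁻¹) =
        R (m + 1 - 2 * (i - 1 : ℕ)) * (R (m + 1 - 2 * i))⁻¹ := fun i hi => by
    rw [map_mul, rescale_inv _ (hR _), rescale_zpow_rescale_zpow qq_ne_zero,
      rescale_zpow_rescale_zpow qq_ne_zero, Nat.cast_sub (Finset.mem_Icc.mp hi).1]
    congr 4
    push_cast
    ring
  rw [Finset.prod_congr rfl hY, prod_Icc_mul_inv_telescope (fun n => R (m + 1 - 2 * n))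
    fun n => hR _, Nat.cast_zero, mul_zero, sub_zero, show (m : ℤ) + 1 - 2 * m = 1 - m by ring,
    pow_succ, mul_neg_one, neg_mul, map_neg]
  linear_combination (R (1 - m))⁻¹ * rescale_loopQuiverSeries_neg_sub m
    - R (m + 3) * (R (1 - m))⁻¹ * PowerSeries.mul_inv_cancel _ (hR (m + 1))
    + C ((-1) ^ m * qq) * X * PowerSeries.mul_inv_cancel _ (hR (1 - m))
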